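/- arXiv:1803.03154 — 2 statements merged into one kernel-verified Lean document; each statement's English description precedes it below -/
import Mathlib

section
/- Let d be a real number that is not an integer, and let the constant sequence d_t = d for all t ∈ ℤ. With π_i(−d) = Γ(i−d)/(Γ(i+1)·Γ(−d)), define for h ≥ 1, Ψ_h = Σ_{k=1}^{h} (−1)^k Σ_{(i_1,…,i_k)} π_{i_1}(−d)·π_{i_2}(−d)⋯π_{i_k}(−d), where the inner sum ranges over all compositions of h into k positive integer parts. Then for every h ≥ 1, Ψ_h = Γ(h+d)/(Γ(h+1)·Γ(d)); in particular Ψ_1 = d, Ψ_2 = d(d+1)/2, and Ψ_3 = d(d+1)(d+2)/6, recovering the classical moving-average coefficients of the constant-parameter ARFIMA(0,d,0) model. -/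
open Finset Polynomial

private lemma descSmeval_eq_eval (r : ℝ) (k : ℕ) :
    (descPochhammer ℤ k).smeval r = (descPochhammer ℝ k).eval r := by
  rw [← Polynomial.aeval_eq_smeval, Polynomial.aeval_def, Polynomial.eval₂_eq_eval_map,
    descPochhammer_map]

private lemma asc_neg_eq (r : ℝ) (k : ℕ) :
    (ascPochhammer ℝ k).eval (-r) = (-1) ^ k * (descPochhammer ℝ k).eval r := by
  induction k with
  | zero => simp
  | succ k ih =>
      rw [ascPochhammer_succ_eval, descPochhammer_succ_eval, ih]
      ring

/-- Chu–Vandermonde convolution: the coefficients of `(1-x)^d` and `(1-x)^{-d}`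
convolve to zero in positive degree. -/
private lemma conv_zero (x : ℝ) (h : ℕ) (hh : 1 ≤ h) :
    ∑ ij ∈ Finset.HasAntidiagonal.antidiagonal h,
      ((ascPochhammer ℝ ij.1).eval (-x) / ij.1.factorial) *
        ((ascPochhammer ℝ ij.2).eval x / ij.2.factorial) = 0 := by
  have h0 : (0 : ℝ) = ∑ ij ∈ Finset.HasAntidiagonal.antidiagonal h,
      (h.choose ij.1 : ℝ) *
        ((descPochhammer ℝ ij.1).eval x * (descPochhammer ℝ ij.2).eval (-x)) := by
    have := Ring.descPochhammer_smeval_add (R := ℝ) (r := x) (s := -x) h (mul_comm _ _)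
    simp only [descSmeval_eq_eval] at this
    rw [add_neg_cancel] at this
    rw [descPochhammer_ne_zero_eval_zero ℝ (by omega : h ≠ 0)] at this
    exact this
  have key : ∑ ij ∈ Finset.HasAntidiagonal.antidiagonal h,
      ((ascPochhammer ℝ ij.1).eval (-x) / ij.1.factorial) *
        ((ascPochhammer ℝ ij.2).eval x / ij.2.factorial)
      = ((-1) ^ h / h.factorial) * ∑ ij ∈ Finset.HasAntidiagonal.antidiagonal h,
      (h.choose ij.1 : ℝ) *
        ((descPochhammer ℝ ij.1).eval x * (descPochhammer ℝ ij.2).eval (-x)) := by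
    rw [Finset.mul_sum]
    refine Finset.sum_congr rfl ?_
    rintro ⟨i, j⟩ hij
    have hij' : i + j = h := Finset.HasAntidiagonal.mem_antidiagonal.mp hij
    have hfact : (h.choose i : ℝ) * (i.factorial * j.factorial) = h.factorial := by
      have := Nat.choose_mul_factorial_mul_factorial (show i ≤ h by omega)
      have hj : h - i = j := by omega
      rw [hj] at this
      push_cast [← this]
      ring
    have hi : ((ascPochhammer ℝ i).eval (-x)) = (-1) ^ i * (descPochhammer ℝ i).eval x :=
      asc_neg_eq x i
    have hj2 : ((ascPochhammer ℝ j).eval x) = (-1) ^ j * (descPochhammer ℝ j).eval (-x) := by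
      have := asc_neg_eq (-x) j
      rwa [neg_neg] at this
    have hifne : (i.factorial : ℝ) ≠ 0 := by positivity
    have hjfne : (j.factorial : ℝ) ≠ 0 := by positivity
    have hhfne : (h.factorial : ℝ) ≠ 0 := by positivity
    rw [hi, hj2]
    have hsign : ((-1 : ℝ)) ^ i * (-1) ^ j = (-1) ^ h := by
      rw [← pow_add, hij']
    rw [div_mul_div_comm, div_mul_eq_mul_div, div_eq_div_iff (by positivity) hhfne]
    linear_combination
      (-((-1:ℝ) ^ h) * ((descPochhammer ℝ i).eval x * (descPochhammer ℝ j).eval (-x))) * hfact +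
      ((descPochhammer ℝ i).eval x * (descPochhammer ℝ j).eval (-x)
        * (h.factorial : ℝ)) * hsign
  rw [key, ← h0, mul_zero]

/-- Peeling off the first block of a composition. -/
private lemma comp_sum_rec (f : ℕ → ℝ) (h : ℕ) (hh : 1 ≤ h) :
    (∑ c : Composition h, (c.blocks.map f).prod)
      = ∑ j ∈ Finset.Icc 1 h, f j * ∑ c : Composition (h - j), (c.blocks.map f).prod := by
  simp_rw [Finset.mul_sum]
  refine Eq.trans ?_ (Finset.sum_sigma (Finset.Icc 1 h)
    (fun j => (Finset.univ : Finset (Composition (h - j))))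
    (fun a => f a.1 * ((a.2.blocks.map f).prod)))
  refine (Finset.sum_bij'
    (i := fun (a : (j : ℕ) × Composition (h - j)) (ha : a ∈ (Finset.Icc 1 h).sigma
        fun j => (Finset.univ : Finset (Composition (h - j)))) =>
      (⟨a.1 :: a.2.blocks,
        by
          intro i hi
          rcases List.mem_cons.mp hi with rfl | hi
          · have := (Finset.mem_Icc.mp (Finset.mem_sigma.mp ha).1).1; omega
          · exact a.2.blocks_pos hi,
        by
          have h1 : a.1 ≤ h := (Finset.mem_Icc.mp (Finset.mem_sigma.mp ha).1).2
          simp [a.2.blocks_sum]; omega⟩ : Composition h))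
    (j := fun (c : Composition h) (hc : c ∈ (Finset.univ : Finset (Composition h))) =>
      have hne : c.blocks ≠ [] := by
        intro e
        have := c.blocks_sum
        rw [e] at this
        simp at this
        omega
      (⟨c.blocks.head hne,
        ⟨c.blocks.tail,
          by
            intro i hi
            exact c.blocks_pos (List.mem_of_mem_tail hi),
          by
            have h1 : (c.blocks.head hne :: c.blocks.tail).sum = h := by
              rw [List.cons_head_tail]; exact c.blocks_sum
            rw [List.sum_cons] at h1
            omega⟩⟩ : (j : ℕ) × Composition (h - j)))
    ?_ ?_ ?_ ?_ ?_).symm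
  · rintro ⟨j, c⟩ ha
    exact Finset.mem_univ _
  · intro c hc
    rw [Finset.mem_sigma]
    refine ⟨Finset.mem_Icc.mpr ⟨?_, ?_⟩, Finset.mem_univ _⟩
    · exact c.blocks_pos (List.head_mem _)
    · have := c.blocks_sum
      have hmem := List.head_mem (l := c.blocks)
      calc c.blocks.head _ ≤ c.blocks.sum := List.le_sum_of_mem (hmem _)
        _ = h := c.blocks_sum
  · rintro ⟨j, c⟩ ha
    rfl
  · intro c hc
    apply Composition.ext
    simp
  · rintro ⟨j, c⟩ ha
    simp

/-- For constant d, the composition-sum formula for the moving-average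
coefficients of (1−L)^{d_t}Y_t = u_t recovers the classical ARFIMA(0,d,0)
coefficients Ψ_h = Γ(h+d)/(Γ(h+1)Γ(d)); in particular Ψ₁ = d,
Ψ₂ = d(d+1)/2 and Ψ₃ = d(d+1)(d+2)/6. -/
theorem constant_d_composition_sum_recovers_arfima
    (d : ℝ) (hd : ∀ n : ℤ, d ≠ n)
    (p : ℕ → ℝ)
    (hp : ∀ i : ℕ,
      p i = Real.Gamma ((i : ℝ) - d) / (Real.Gamma ((i : ℝ) + 1) * Real.Gamma (-d)))
    (Ψ : ℕ → ℝ)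
    (hΨ : ∀ h : ℕ, 1 ≤ h →
      Ψ h = ∑ k ∈ Finset.Icc 1 h, (-1 : ℝ) ^ k *
        ∑ c ∈ Finset.univ.filter (fun c : Composition h => c.length = k),
          ∏ l : Fin c.length, p (c.blocksFun l)) :
    (∀ h : ℕ, 1 ≤ h →
      Ψ h = Real.Gamma ((h : ℝ) + d) / (Real.Gamma ((h : ℝ) + 1) * Real.Gamma d)) ∧
    Ψ 1 = d ∧ Ψ 2 = d * (d + 1) / 2 ∧ Ψ 3 = d * (d + 1) * (d + 2) / 6 := by
  -- basic non-vanishing facts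
  have hΓd : Real.Gamma d ≠ 0 := by
    refine Real.Gamma_ne_zero fun m => ?_
    have := hd (-(m : ℤ))
    push_cast at this
    exact this
  have hΓnd : Real.Gamma (-d) ≠ 0 := by
    refine Real.Gamma_ne_zero fun m => ?_
    have := hd (m : ℤ)
    intro e
    exact this (by push_cast; linarith)
  have hxd : ∀ k : ℕ, d + (k : ℝ) ≠ 0 := by
    intro k e
    exact hd (-(k : ℤ)) (by push_cast; linarith)
  have hxnd : ∀ k : ℕ, -d + (k : ℝ) ≠ 0 := by
    intro k e
    exact hd (k : ℤ) (by push_cast; linarith)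
  -- Gamma and Pochhammer
  have hGA : ∀ (x : ℝ), (∀ k : ℕ, x + (k : ℝ) ≠ 0) → ∀ n : ℕ,
      Real.Gamma (x + n) = Real.Gamma x * (ascPochhammer ℝ n).eval x := by
    intro x hx n
    induction n with
    | zero => simp
    | succ n ih =>
        have : x + ((n : ℝ) + 1) = (x + n) + 1 := by ring
        push_cast
        rw [this, Real.Gamma_add_one (hx n), ih, ascPochhammer_succ_eval]
        ring
  have hpA : ∀ i : ℕ, p i = (ascPochhammer ℝ i).eval (-d) / i.factorial := by
    intro i
    rw [hp]
    have h1 : (i : ℝ) - d = -d + i := by ring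
    rw [h1, hGA (-d) hxnd i, Real.Gamma_nat_eq_factorial]
    have hif : (i.factorial : ℝ) ≠ 0 := by positivity
    field_simp
  set q : ℕ → ℝ := fun n => (ascPochhammer ℝ n).eval d / n.factorial with hq
  have hqΓ : ∀ h : ℕ, Real.Gamma ((h : ℝ) + d) / (Real.Gamma ((h : ℝ) + 1) * Real.Gamma d)
      = q h := by
    intro h
    have h1 : (h : ℝ) + d = d + h := by ring
    rw [h1, hGA d hxd h, Real.Gamma_nat_eq_factorial, hq]
    have hhf : (h.factorial : ℝ) ≠ 0 := by positivity
    field_simp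
  have hp0 : p 0 = 1 := by
    rw [hpA]; simp
  -- the composition sum
  set F : ℕ → ℝ := fun n => ∑ c : Composition n, ((c.blocks.map fun i => -p i).prod) with hF
  have hF0 : F 0 = 1 := by
    have hblocks : ∀ c : Composition 0, c.blocks = [] := by
      intro c
      cases hb : c.blocks with
      | nil => rfl
      | cons a l =>
          have hpos := c.blocks_pos (hb ▸ List.mem_cons_self (a := a) (l := l))
          have hs := c.blocks_sum
          rw [hb] at hs
          simp at hs
          omega
    have : ∀ c : Composition 0, ((c.blocks.map fun i => -p i).prod) = 1 := by
      intro c; rw [hblocks c]; simp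
    simp only [hF]
    rw [Finset.sum_congr rfl fun c _ => this c, Finset.sum_const, Finset.card_univ,
      composition_card]
    simp
  -- strong induction: F = q
  have hFq : ∀ n : ℕ, F n = q n := by
    intro n
    induction n using Nat.strong_induction_on with
    | _ n ih =>
        rcases Nat.eq_zero_or_pos n with rfl | hn
        · rw [hF0]; simp [hq]
        · have hrec := comp_sum_rec (fun i => -p i) n hn
          have hstep : F n = -∑ j ∈ Finset.Icc 1 n, p j * q (n - j) := by
            simp only [hF]
            rw [hrec, ← Finset.sum_neg_distrib]
            refine Finset.sum_congr rfl fun j hj => ?_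
            have hj1 := (Finset.mem_Icc.mp hj).1
            have hihj : (∑ c : Composition (n - j), ((c.blocks.map fun i => -p i).prod))
                = q (n - j) := ih (n - j) (by omega)
            rw [hihj]; ring
          have hconv := conv_zero d n hn
          have hconv' : ∑ j ∈ Finset.range (n + 1), p j * q (n - j) = 0 := by
            rw [← hconv, Finset.Nat.sum_antidiagonal_eq_sum_range_succ
              (f := fun i j => ((ascPochhammer ℝ i).eval (-d) / i.factorial)
                * ((ascPochhammer ℝ j).eval d / j.factorial))]
            refine Finset.sum_congr rfl fun j hj => ?_
            rw [hpA, hq]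
          have hsplit : p 0 * q n + ∑ j ∈ Finset.Icc 1 n, p j * q (n - j) = 0 := by
            rw [← hconv', Finset.sum_range_succ']
            have : ∑ j ∈ Finset.Icc 1 n, p j * q (n - j)
                = ∑ i ∈ Finset.range n, p (i + 1) * q (n - (i + 1)) := by
              rw [← Finset.Ico_add_one_right_eq_Icc, Finset.sum_Ico_eq_sum_range]
              refine Finset.sum_congr (by norm_num) fun i _ => ?_
              rw [add_comm 1 i]
            rw [this]
            simp [add_comm]
          rw [hp0, one_mul] at hsplit
          rw [hstep]
          linarith
  -- Ψ agrees with F for h ≥ 1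
  have hΨF : ∀ h : ℕ, 1 ≤ h → Ψ h = F h := by
    intro h hh
    have hterm : ∀ c : Composition h,
        (-1 : ℝ) ^ c.length * ∏ l : Fin c.length, p (c.blocksFun l)
          = ((c.blocks.map fun i => -p i).prod) := by
      intro c
      rw [← c.ofFn_blocksFun, List.map_ofFn, List.prod_ofFn]
      simp only [Function.comp]
      have : ∀ l : Fin c.length, -p (c.blocksFun l) = (-1) * p (c.blocksFun l) := by
        intro l; ring
      rw [Finset.prod_congr rfl fun l _ => this l, Finset.prod_mul_distrib,
        Finset.prod_const, Finset.card_univ, Fintype.card_fin]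
    rw [hΨ h hh]
    simp only [hF]
    rw [← Finset.sum_fiberwise_of_maps_to (g := fun c : Composition h => c.length)
      (t := Finset.Icc 1 h) (fun c _ => Finset.mem_Icc.mpr
        ⟨c.length_pos_of_pos (by omega), c.length_le⟩)
      (fun c => ((c.blocks.map fun i => -p i).prod))]
    refine Finset.sum_congr rfl fun k hk => ?_
    rw [Finset.mul_sum]
    refine Finset.sum_congr rfl fun c hc => ?_
    have hlen : c.length = k := (Finset.mem_filter.mp hc).2
    rw [← hlen]
    exact hterm c
  -- conclude
  have hmain : ∀ h : ℕ, 1 ≤ h →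
      Ψ h = Real.Gamma ((h : ℝ) + d) / (Real.Gamma ((h : ℝ) + 1) * Real.Gamma d) := by
    intro h hh
    rw [hΨF h hh, hFq h, hqΓ h]
  refine ⟨hmain, ?_, ?_, ?_⟩
  · rw [hΨF 1 le_rfl, hFq 1]
    simp only [hq]
    simp [ascPochhammer_one]
  · rw [hΨF 2 (by norm_num), hFq 2]
    simp only [hq, ascPochhammer_succ_eval, ascPochhammer_zero, Polynomial.eval_one]
    norm_num [Nat.factorial]
  · rw [hΨF 3 (by norm_num), hFq 3]
    simp only [hq, ascPochhammer_succ_eval, ascPochhammer_zero, Polynomial.eval_one]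
    norm_num [Nat.factorial]
end

section
/- Let d : ℤ → ℝ be such that d_t is not an integer for every t, and set π_i(−d_t) = Γ(i−d_t)/(Γ(i+1)·Γ(−d_t)). Define Ψ_1(t) = −π_1(−d_t) and Ψ_2(t) = −π_2(−d_t) + π_1(−d_t)·π_1(−d_{t−1}) (the first two moving-average coefficients of the periodic fractional model (1−L)^{d_t}Y_t = u_t). Then for every t ∈ ℤ, Ψ_1(t) = d_t and Ψ_2(t) = d_t(1−d_t)/2 + d_t·d_{t−1}. Consequently Ψ_2(t) equals the constant-parameter coefficient d_t(d_t+1)/2 if and only if d_t·(d_{t−1} − d_t) = 0; in particular, when d is non-constant with nonzero values the moving-average representation of (1−L)^{d_t}Y_t = u_t differs from the term-by-term analogue of the constant-d ARFIMA expansion. -/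
lemma gamma_shift_aux (x : ℝ) (hx : ∀ n : ℤ, x ≠ n) :
    Real.Gamma (1 - x) = (-x) * Real.Gamma (-x) ∧
    Real.Gamma (2 - x) = (1 - x) * (-x) * Real.Gamma (-x) ∧
    Real.Gamma (-x) ≠ 0 := by
  have hne : Real.Gamma (-x) ≠ 0 := by
    apply Real.Gamma_ne_zero
    intro n
    intro h
    exact hx n (by push_cast; linarith)
  have h1 : Real.Gamma (1 - x) = (-x) * Real.Gamma (-x) := by
    have := Real.Gamma_add_one (s := -x) (by
      intro h; exact hx 0 (by push_cast; linarith))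
    rw [show (1 : ℝ) - x = -x + 1 by ring] at *
    exact this
  have h2 : Real.Gamma (2 - x) = (1 - x) * (-x) * Real.Gamma (-x) := by
    have hne1 : (1 : ℝ) - x ≠ 0 := by
      intro h; exact hx 1 (by push_cast; linarith)
    have := Real.Gamma_add_one (s := 1 - x) hne1
    rw [show (1 : ℝ) - x + 1 = 2 - x by ring] at this
    rw [this, h1]; ring
  exact ⟨h1, h2, hne⟩

/-- The first two moving-average coefficients of the periodic fractional model
(1−L)^{d_t}Y_t = u_t: Ψ₁(t) = d_t and Ψ₂(t) = d_t(1−d_t)/2 + d_t·d_{t−1},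
which equals the constant-parameter coefficient d_t(d_t+1)/2 iff
d_t·(d_{t−1} − d_t) = 0. -/
theorem periodic_fractional_first_two_ma_coefficients
    (d : ℤ → ℝ) (hd : ∀ (t : ℤ) (n : ℤ), d t ≠ n)
    (p : ℤ → ℕ → ℝ)
    (hp : ∀ (t : ℤ) (i : ℕ),
      p t i = Real.Gamma ((i : ℝ) - d t) / (Real.Gamma ((i : ℝ) + 1) * Real.Gamma (-(d t))))
    (Ψ₁ Ψ₂ : ℤ → ℝ)
    (hΨ₁ : ∀ t : ℤ, Ψ₁ t = -(p t 1))
    (hΨ₂ : ∀ t : ℤ, Ψ₂ t = -(p t 2) + p t 1 * p (t - 1) 1) :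
    ∀ t : ℤ,
      Ψ₁ t = d t ∧
      Ψ₂ t = d t * (1 - d t) / 2 + d t * d (t - 1) ∧
      (Ψ₂ t = d t * (d t + 1) / 2 ↔ d t * (d (t - 1) - d t) = 0) := by
  have hG2 : Real.Gamma 2 = 1 := by
    rw [show (2:ℝ) = 1 + 1 by norm_num, Real.Gamma_add_one one_ne_zero, Real.Gamma_one]; ring
  have hG3 : Real.Gamma 3 = 2 := by
    rw [show (3:ℝ) = 2 + 1 by norm_num, Real.Gamma_add_one two_ne_zero, hG2]; ring
  have hp1 : ∀ t : ℤ, p t 1 = -(d t) := by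
    intro t
    obtain ⟨h1, _, hne⟩ := gamma_shift_aux (d t) (hd t)
    rw [hp t 1]
    push_cast
    rw [h1, show (1:ℝ) + 1 = 2 by norm_num, hG2]
    field_simp
  have hp2 : ∀ t : ℤ, p t 2 = -(d t) * (1 - d t) / 2 := by
    intro t
    obtain ⟨_, h2, hne⟩ := gamma_shift_aux (d t) (hd t)
    rw [hp t 2]
    push_cast
    rw [h2, show (2:ℝ) + 1 = 3 by norm_num, hG3]
    field_simp
  intro t
  have e1 : Ψ₁ t = d t := by rw [hΨ₁ t, hp1 t]; ring
  have e2 : Ψ₂ t = d t * (1 - d t) / 2 + d t * d (t - 1) := by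
    rw [hΨ₂ t, hp2 t, hp1 t, hp1 (t - 1)]; ring
  refine ⟨e1, e2, ?_⟩
  rw [e2]
  constructor
  · intro h; nlinarith
  · intro h; nlinarith
end
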